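/- Fix σ > 0, g ∈ ℝᵐ, h ∈ ℝⁿ, and a nonempty closed convex set C ⊆ ℝⁿ with ‖g‖ > dist(h, C). Then the minimum over w ∈ ℝⁿ of √(‖w‖² + σ²)·‖g‖ − ⟨h, w⟩ + sup_{s∈C} ⟨s, w⟩ equals σ·√(‖g‖² − dist(h,C)²), and it is attained at w* = σ·(h − Proj(h,C))/√(‖g‖² − dist(h,C)²), whose squared norm equals σ²·dist(h,C)²/(‖g‖² − dist(h,C)²). -/

import Mathlib

open Metric

/-- The objective `√(‖w‖² + σ²)‖g‖ − ⟨h,w⟩ + sup_{s ∈ C} ⟨s,w⟩` (valued in `EReal`,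
since the support function may be infinite). -/
noncomputable def keyObj {m n : ℕ} (σ : ℝ) (g : EuclideanSpace ℝ (Fin m))
    (C : Set (EuclideanSpace ℝ (Fin n))) (h w : EuclideanSpace ℝ (Fin n)) : EReal :=
  ((Real.sqrt (‖w‖ ^ 2 + σ ^ 2) * ‖g‖ - (inner ℝ h w : ℝ) : ℝ) : EReal) +
    ⨆ s : C, (((inner ℝ (s : EuclideanSpace ℝ (Fin n)) w : ℝ) : EReal))

/-
Since `p ∈ C`, the support function at `w` is at least `⟪p, w⟫`, so with `t = ‖w‖` and
`d = ‖h - p‖` the objective is at least `√(t² + σ²)‖g‖ - d t`, which Cauchy–Schwarz in `ℝ²`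
for `(σ, t) · (√(‖g‖² - d²), d)` bounds below by `σ √(‖g‖² - d²)`. At `w*` both steps are
equalities: `w*` lies in the normal cone of `C` at `p`, so the support function is attained at
`p`, and `(σ, ‖w*‖)` is parallel to `(√(‖g‖² - d²), d)`.
-/

open RealInnerProductSpace

lemma Metric.infDist_eq_dist_of_forall_dist_le {α : Type*} [PseudoMetricSpace α] {s : Set α}
    {x p : α} (hp : p ∈ s) (hmin : ∀ y ∈ s, dist x p ≤ dist x y) : infDist x s = dist x p :=
  le_antisymm (infDist_le_dist_of_mem hp) ((le_infDist ⟨p, hp⟩).2 hmin)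

section InnerProductSpace

variable {E : Type*} [NormedAddCommGroup E] [InnerProductSpace ℝ E]

lemma inner_le_inner_of_forall_norm_sub_le {C : Set E} (hC : Convex ℝ C) {h p : E} (hp : p ∈ C)
    (hmin : ∀ s ∈ C, ‖h - p‖ ≤ ‖h - s‖) {s : E} (hs : s ∈ C) : ⟪s, h - p⟫ ≤ ⟪p, h - p⟫ := by
  have hinf : ‖h - p‖ = ⨅ y : C, ‖h - y‖ := by
    simpa only [dist_eq_norm, infDist_eq_iInf] using
      (infDist_eq_dist_of_forall_dist_le hp (by simpa only [dist_eq_norm] using hmin)).symm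
  have := (norm_eq_iInf_iff_real_inner_le_zero hC hp).1 hinf s hs
  rw [real_inner_comm, inner_sub_left] at this
  linarith

lemma Real.mul_sqrt_sub_sq_add_mul_le {σ t d G : ℝ} (hG : 0 ≤ G) (hd : d ^ 2 ≤ G ^ 2) :
    σ * √(G ^ 2 - d ^ 2) + d * t ≤ √(t ^ 2 + σ ^ 2) * G := by
  have hB := Real.sq_sqrt (sub_nonneg.2 hd)
  calc σ * √(G ^ 2 - d ^ 2) + d * t ≤ |σ * √(G ^ 2 - d ^ 2) + d * t| := le_abs_self _
    _ ≤ √((t ^ 2 + σ ^ 2) * G ^ 2) :=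
      Real.abs_le_sqrt (by nlinarith [sq_nonneg (t * √(G ^ 2 - d ^ 2) - σ * d)])
    _ = √(t ^ 2 + σ ^ 2) * G := by rw [Real.sqrt_mul (by positivity), Real.sqrt_sq hG]

lemma mul_sqrt_sub_sq_le_sqrt_norm_sq_add_sq_mul_sub_inner {σ G : ℝ} {u : E} (hu : ‖u‖ ≤ G)
    (v : E) : σ * √(G ^ 2 - ‖u‖ ^ 2) ≤ √(‖v‖ ^ 2 + σ ^ 2) * G - ⟪u, v⟫ := by
  have hG : 0 ≤ G := (norm_nonneg u).trans hu
  have := Real.mul_sqrt_sub_sq_add_mul_le (σ := σ) (t := ‖v‖) hG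
    (pow_le_pow_left₀ (norm_nonneg u) hu 2)
  linarith [real_inner_le_norm u v]

lemma norm_div_sqrt_sub_sq_smul_sq {σ G : ℝ} {u : E} (hu : ‖u‖ < G) :
    ‖(σ / √(G ^ 2 - ‖u‖ ^ 2)) • u‖ ^ 2 = σ ^ 2 * ‖u‖ ^ 2 / (G ^ 2 - ‖u‖ ^ 2) := by
  have hΔ : 0 ≤ G ^ 2 - ‖u‖ ^ 2 := by nlinarith [norm_nonneg u]
  rw [norm_smul, mul_pow, Real.norm_eq_abs, sq_abs, div_pow, Real.sq_sqrt hΔ]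
  ring

lemma sqrt_norm_sq_add_sq_mul_sub_inner_div_sqrt_sub_sq_smul {σ G : ℝ} (hσ : 0 ≤ σ) {u : E}
    (hu : ‖u‖ < G) :
    √(‖(σ / √(G ^ 2 - ‖u‖ ^ 2)) • u‖ ^ 2 + σ ^ 2) * G - ⟪u, (σ / √(G ^ 2 - ‖u‖ ^ 2)) • u⟫
      = σ * √(G ^ 2 - ‖u‖ ^ 2) := by
  have hΔ : 0 < G ^ 2 - ‖u‖ ^ 2 := by nlinarith [norm_nonneg u]
  set B := √(G ^ 2 - ‖u‖ ^ 2)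
  have hB : 0 < B := Real.sqrt_pos.2 hΔ
  have hB2 : B ^ 2 = G ^ 2 - ‖u‖ ^ 2 := Real.sq_sqrt hΔ.le
  have hG : 0 < G := (norm_nonneg u).trans_lt hu
  have hnorm : ‖(σ / B) • u‖ ^ 2 + σ ^ 2 = (σ * G / B) ^ 2 := by
    rw [norm_div_sqrt_sub_sq_smul_sq hu, ← hB2]
    field_simp
    nlinarith
  rw [hnorm, Real.sqrt_sq (by positivity), real_inner_smul_right, real_inner_self_eq_norm_sq]
  field_simp
  rw [hB2]

end InnerProductSpace

section keyObj

variable {m n : ℕ} (σ : ℝ) (g : EuclideanSpace ℝ (Fin m)) {C : Set (EuclideanSpace ℝ (Fin n))}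
  (h : EuclideanSpace ℝ (Fin n)) {p : EuclideanSpace ℝ (Fin n)}

lemma keyObj_eq_coe_add_iSup (w : EuclideanSpace ℝ (Fin n)) :
    keyObj σ g C h w = ((√(‖w‖ ^ 2 + σ ^ 2) * ‖g‖ - ⟪h - p, w⟫ - ⟪p, w⟫ : ℝ) : EReal)
      + ⨆ s : C, (⟪(s : EuclideanSpace ℝ (Fin n)), w⟫ : EReal) := by
  rw [keyObj, inner_sub_left]
  congr 2
  ring

lemma le_keyObj_of_mem (hp : p ∈ C) (w : EuclideanSpace ℝ (Fin n)) :
    ((√(‖w‖ ^ 2 + σ ^ 2) * ‖g‖ - ⟪h - p, w⟫ : ℝ) : EReal) ≤ keyObj σ g C h w := by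
  rw [keyObj_eq_coe_add_iSup σ g h (p := p), ← sub_add_cancel (_ - _) ⟪p, w⟫, EReal.coe_add,
    add_sub_cancel_right]
  exact add_le_add_right (le_iSup (fun s : C => (⟪(s : EuclideanSpace ℝ (Fin n)), w⟫ : EReal))
    ⟨p, hp⟩) _

lemma keyObj_eq_of_forall_inner_le (hp : p ∈ C) {w : EuclideanSpace ℝ (Fin n)}
    (hmax : ∀ s ∈ C, ⟪s, w⟫ ≤ ⟪p, w⟫) :
    keyObj σ g C h w = ((√(‖w‖ ^ 2 + σ ^ 2) * ‖g‖ - ⟪h - p, w⟫ : ℝ) : EReal) := by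
  have hsup : ⨆ s : C, (⟪(s : EuclideanSpace ℝ (Fin n)), w⟫ : EReal) = (⟪p, w⟫ : ℝ) :=
    le_antisymm (iSup_le fun s => EReal.coe_le_coe_iff.2 (hmax s s.2))
      (le_iSup (fun s : C => (⟪(s : EuclideanSpace ℝ (Fin n)), w⟫ : EReal)) ⟨p, hp⟩)
  rw [keyObj_eq_coe_add_iSup σ g h (p := p), hsup, ← EReal.coe_add, sub_add_cancel]

end keyObj

theorem stmt14_general {m n : ℕ} (σ : ℝ) (hσ : 0 < σ) (g : EuclideanSpace ℝ (Fin m))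
    (C : Set (EuclideanSpace ℝ (Fin n)))
    (hCconv : Convex ℝ C) (h p : EuclideanSpace ℝ (Fin n)) (hpC : p ∈ C)
    (hproj : ∀ s ∈ C, ‖h - p‖ ≤ ‖h - s‖) (hgd : infDist h C < ‖g‖) :
    (⨅ w : EuclideanSpace ℝ (Fin n), keyObj σ g C h w)
      = ((σ * Real.sqrt (‖g‖ ^ 2 - infDist h C ^ 2) : ℝ) : EReal) ∧
    keyObj σ g C h ((σ / Real.sqrt (‖g‖ ^ 2 - infDist h C ^ 2)) • (h - p))
      = ((σ * Real.sqrt (‖g‖ ^ 2 - infDist h C ^ 2) : ℝ) : EReal) ∧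
    ‖(σ / Real.sqrt (‖g‖ ^ 2 - infDist h C ^ 2)) • (h - p)‖ ^ 2
      = σ ^ 2 * infDist h C ^ 2 / (‖g‖ ^ 2 - infDist h C ^ 2) := by
  have hd : infDist h C = ‖h - p‖ := by
    simpa only [dist_eq_norm] using
      infDist_eq_dist_of_forall_dist_le hpC (by simpa only [dist_eq_norm] using hproj)
  rw [hd] at hgd ⊢
  have hlow (v : EuclideanSpace ℝ (Fin n)) :
      ((σ * √(‖g‖ ^ 2 - ‖h - p‖ ^ 2) : ℝ) : EReal) ≤ keyObj σ g C h v :=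
    (EReal.coe_le_coe_iff.2 (mul_sqrt_sub_sq_le_sqrt_norm_sq_add_sq_mul_sub_inner hgd.le v)).trans
      (le_keyObj_of_mem σ g h hpC v)
  have hval : keyObj σ g C h ((σ / √(‖g‖ ^ 2 - ‖h - p‖ ^ 2)) • (h - p))
      = ((σ * √(‖g‖ ^ 2 - ‖h - p‖ ^ 2) : ℝ) : EReal) := by
    refine (keyObj_eq_of_forall_inner_le σ g h hpC fun s hs => ?_).trans ?_
    · simp only [real_inner_smul_right]
      exact mul_le_mul_of_nonneg_left (inner_le_inner_of_forall_norm_sub_le hCconv hpC hproj hs)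
        (by positivity)
    · rw [sqrt_norm_sq_add_sq_mul_sub_inner_div_sqrt_sub_sq_smul hσ.le hgd]
  exact ⟨le_antisymm (iInf_le_of_le _ hval.le) (le_iInf hlow), hval,
    norm_div_sqrt_sub_sq_smul_sq hgd⟩

theorem stmt14 {m n : ℕ} (σ : ℝ) (hσ : 0 < σ) (g : EuclideanSpace ℝ (Fin m))
    (C : Set (EuclideanSpace ℝ (Fin n))) (hCne : C.Nonempty) (hCcl : IsClosed C)
    (hCconv : Convex ℝ C) (h p : EuclideanSpace ℝ (Fin n)) (hpC : p ∈ C)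
    (hproj : ∀ s ∈ C, ‖h - p‖ ≤ ‖h - s‖) (hgd : infDist h C < ‖g‖) :
    (⨅ w : EuclideanSpace ℝ (Fin n), keyObj σ g C h w)
      = ((σ * Real.sqrt (‖g‖ ^ 2 - infDist h C ^ 2) : ℝ) : EReal) ∧
    keyObj σ g C h ((σ / Real.sqrt (‖g‖ ^ 2 - infDist h C ^ 2)) • (h - p))
      = ((σ * Real.sqrt (‖g‖ ^ 2 - infDist h C ^ 2) : ℝ) : EReal) ∧
    ‖(σ / Real.sqrt (‖g‖ ^ 2 - infDist h C ^ 2)) • (h - p)‖ ^ 2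
      = σ ^ 2 * infDist h C ^ 2 / (‖g‖ ^ 2 - infDist h C ^ 2) :=
  stmt14_general σ hσ g C hCconv h p hpC hproj hgd
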